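/- arXiv:2107.10785 — 3 statements merged into one kernel-verified Lean document; each statement's English description precedes it below -/
import Mathlib

section
/- Let 𝒜 be a homogeneous linear differential operator of order k with symbol 𝔸(ξ) and wave cone Λ_𝒜 ⊆ ℝ^n. Let π = span(Λ_𝒜) have dimension d ≥ 1 and fix an orthonormal basis e_1, …, e_d of π. Define the homogeneous operator 𝒜' of order k acting on ℝ^d-valued functions by the symbol 𝔸'(ξ)(u) = 𝔸(ξ)(Σ_{i=1}^d u_i e_i) for u = (u_1,…,u_d) ∈ ℝ^d. Then: (i) 𝒜' is balanced, i.e. span(Λ_{𝒜'}) = ℝ^d; and (ii) 𝒜 has constant rank if and only if 𝒜' has constant rank. -/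
open MeasureTheory Metric Set Matrix Filter

/-- Multi-indices on `Fin m` of total degree `k`. -/
def mIdx (m k : ℕ) : Finset (Fin m → ℕ) :=
  (Fintype.piFinset fun _ => Finset.range (k + 1)).filter fun α => ∑ i, α i = k

/-- Partial derivative in the `i`-th coordinate direction. -/
noncomputable def pderiv' {m : ℕ} {E : Type*} [NormedAddCommGroup E] [NormedSpace ℝ E]
    (i : Fin m) (f : (Fin m → ℝ) → E) : (Fin m → ℝ) → E :=
  fun x => fderiv ℝ f x (Pi.single i 1)

/-- Iterated partial derivative `∂^α`. -/
noncomputable def mderiv {m : ℕ} {E : Type*} [NormedAddCommGroup E] [NormedSpace ℝ E]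
    (α : Fin m → ℕ) (f : (Fin m → ℝ) → E) : (Fin m → ℝ) → E :=
  (List.finRange m).foldr (fun i g => (pderiv' i)^[α i] g) f

/-- The symbol `𝔸(ξ) = Σ_{|α|=k} ξ^α A_α` of a homogeneous operator of order `k`. -/
noncomputable def opSymb {m n N : ℕ} (k : ℕ) (A : (Fin m → ℕ) → Matrix (Fin N) (Fin n) ℝ)
    (ξ : Fin m → ℝ) : Matrix (Fin N) (Fin n) ℝ :=
  ∑ α ∈ mIdx m k, (∏ i, ξ i ^ α i) • A α

/-- The wave cone `Λ_𝒜 = ⋃_{ξ ≠ 0} ker 𝔸(ξ)`. -/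
def waveCone {m n N : ℕ} (k : ℕ) (A : (Fin m → ℕ) → Matrix (Fin N) (Fin n) ℝ) :
    Set (Fin n → ℝ) :=
  {η | ∃ ξ : Fin m → ℝ, ξ ≠ 0 ∧ (opSymb k A ξ).mulVec η = 0}

/-- `𝒜` has constant rank. -/
def ConstRank {m n N : ℕ} (k : ℕ) (A : (Fin m → ℕ) → Matrix (Fin N) (Fin n) ℝ) : Prop :=
  ∃ r, ∀ ξ : Fin m → ℝ, ξ ≠ 0 → (opSymb k A ξ).rank = r

/-- `𝒜` is balanced: the wave cone spans `ℝ^n`. -/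
def IsBalanced {m n N : ℕ} (k : ℕ) (A : (Fin m → ℕ) → Matrix (Fin N) (Fin n) ℝ) : Prop :=
  Submodule.span ℝ (waveCone k A) = ⊤

/-- `𝓑` (order `k'`, coefficients `B`) is a potential for `𝒜` (order `k`, coefficients `A`). -/
def IsPotential {m n n' N : ℕ} (k k' : ℕ) (A : (Fin m → ℕ) → Matrix (Fin N) (Fin n) ℝ)
    (B : (Fin m → ℕ) → Matrix (Fin n) (Fin n') ℝ) : Prop :=
  ∀ ξ : Fin m → ℝ, ξ ≠ 0 →
    LinearMap.ker (opSymb k A ξ).mulVecLin = LinearMap.range (opSymb k' B ξ).mulVecLin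

/-- Pointwise action `𝓑(V)(x) = Σ_{|α|=k'} B_α ∂^α V (x)`. -/
noncomputable def opApply {m n n' : ℕ} (k' : ℕ) (B : (Fin m → ℕ) → Matrix (Fin n) (Fin n') ℝ)
    (V : (Fin m → ℝ) → (Fin n' → ℝ)) : (Fin m → ℝ) → (Fin n → ℝ) :=
  fun x => ∑ α ∈ mIdx m k', (B α).mulVec (mderiv α V x)

/-- `𝒜(u) = 0` on `Ω` in the sense of distributions. -/
def AFree {m n N : ℕ} (k : ℕ) (A : (Fin m → ℕ) → Matrix (Fin N) (Fin n) ℝ)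
    (Ω : Set (Fin m → ℝ)) (u : (Fin m → ℝ) → (Fin n → ℝ)) : Prop :=
  ∀ φ : (Fin m → ℝ) → (Fin N → ℝ), ContDiff ℝ (⊤ : ℕ∞) φ → HasCompactSupport φ → tsupport φ ⊆ Ω →
    ∫ x in Ω, u x ⬝ᵥ (∑ α ∈ mIdx m k, (A α)ᵀ.mulVec (mderiv α φ x)) = 0

/-- `f` coincides with a polynomial of degree at most `d`. -/
def IsPolyDegLE {m : ℕ} (d : ℕ) (f : (Fin m → ℝ) → ℝ) : Prop :=
  ∃ p : MvPolynomial (Fin m) ℝ, p.totalDegree ≤ d ∧ ∀ x, f x = MvPolynomial.eval x p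

/-- `f` is piecewise a polynomial of degree (at most) `d` on `Ω`. -/
def PiecewisePolyOn {m : ℕ} (d : ℕ) (Ω : Set (Fin m → ℝ)) (f : (Fin m → ℝ) → ℝ) : Prop :=
  ∃ U : ℕ → Set (Fin m → ℝ), (∀ j, IsOpen (U j)) ∧ (∀ j, U j ⊆ Ω) ∧
    (Pairwise fun i j => Disjoint (U i) (U j)) ∧ volume (Ω \ ⋃ j, U j) = 0 ∧
    ∀ j, ∃ p : MvPolynomial (Fin m) ℝ, p.totalDegree ≤ d ∧ ∀ x ∈ U j, f x = MvPolynomial.eval x p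

/-- Bound on the `W^{k',∞} ∩ C^{k'-1}(Ω̄)` norm: all derivatives of order `< k'` are bounded
by `C` on `Ω̄` and the order-`k'` derivatives are essentially bounded by `C` on `Ω`. -/
def NormLeWC {m n' : ℕ} (k' : ℕ) (Ω : Set (Fin m → ℝ)) (V : (Fin m → ℝ) → (Fin n' → ℝ))
    (C : ℝ) : Prop :=
  (∀ j < k', ∀ x ∈ closure Ω, ‖iteratedFDerivWithin ℝ j V (closure Ω) x‖ ≤ C) ∧
  (∀ᵐ x ∂(volume.restrict Ω), ‖iteratedFDeriv ℝ k' V x‖ ≤ C)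

/-- `‖V - W‖_{C^{k'-1}(Ω̄)} ≤ ε` (all derivatives of order `< k'`). -/
def CloseCLT {m n' : ℕ} (k' : ℕ) (Ω : Set (Fin m → ℝ)) (V W : (Fin m → ℝ) → (Fin n' → ℝ))
    (ε : ℝ) : Prop :=
  ∀ j < k', ∀ x ∈ closure Ω,
    ‖iteratedFDerivWithin ℝ j V (closure Ω) x - iteratedFDerivWithin ℝ j W (closure Ω) x‖ ≤ ε

/-- `V` and `W` agree, together with all derivatives of order `< k'`, on `∂Ω`. -/
def AgreeOnBoundaryLT {m n' : ℕ} (k' : ℕ) (Ω : Set (Fin m → ℝ))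
    (V W : (Fin m → ℝ) → (Fin n' → ℝ)) : Prop :=
  ∀ j < k', ∀ x ∈ frontier Ω,
    iteratedFDerivWithin ℝ j V (closure Ω) x = iteratedFDerivWithin ℝ j W (closure Ω) x

/-- `E` is essentially open in `Ω`. -/
def EssOpenIn {m : ℕ} (Ω E : Set (Fin m → ℝ)) : Prop :=
  volume (frontier E ∩ Ω) = 0

/-- A `Λ`-convex function. -/
def LamConvex {n : ℕ} (Λ : Set (Fin n → ℝ)) (f : (Fin n → ℝ) → ℝ) : Prop :=
  ∀ a b : Fin n → ℝ, a - b ∈ Λ → ∀ t : ℝ, t ∈ Set.Icc (0:ℝ) 1 →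
    f (t • a + (1 - t) • b) ≤ t * f a + (1 - t) * f b

/-- The `Λ`-convex hull of a (compact) set `K`: barycentres of laminates supported in `K`. -/
def lamHull {n : ℕ} (Λ : Set (Fin n → ℝ)) (K : Set (Fin n → ℝ)) : Set (Fin n → ℝ) :=
  {x | ∃ ν : Measure (Fin n → ℝ), IsProbabilityMeasure ν ∧ ν Kᶜ = 0 ∧
        x = ∫ y, y ∂ν ∧
        ∀ f : (Fin n → ℝ) → ℝ, Continuous f → LamConvex Λ f → f x ≤ ∫ y, f y ∂ν}

/-- The `Λ`-convex hull of an open set. -/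
def lamHullOpen {n : ℕ} (Λ : Set (Fin n → ℝ)) (U : Set (Fin n → ℝ)) : Set (Fin n → ℝ) :=
  ⋃ K ∈ {K : Set (Fin n → ℝ) | IsCompact K ∧ K ⊆ U}, lamHull Λ K

/-!
Let `T : ℝ^d → ℝ^n` be `u ↦ Σ uᵢ eᵢ`. Orthonormality makes `T` injective, its range is
`π = span Λ_𝒜`, and `𝔸'(ξ) = 𝔸(ξ) ∘ T`. Hence `Λ_{𝒜'} = T⁻¹ Λ_𝒜`, whose span is carried by `T`
onto `π = range T`, so it is all of `ℝ^d`. Since `ker 𝔸(ξ) ⊆ Λ_𝒜 ⊆ range T`, the map `T`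
identifies `ker 𝔸'(ξ)` with `ker 𝔸(ξ)`, so by rank–nullity `rank 𝔸(ξ) - rank 𝔸'(ξ) = n - d`
for every `ξ ≠ 0`.
-/

open Module

theorem linearIndependent_of_dotProduct_eq_ite {ι n : Type*} [Fintype ι] [DecidableEq ι]
    [Fintype n] {e : ι → n → ℝ} (he : ∀ i j, e i ⬝ᵥ e j = if i = j then (1 : ℝ) else 0) :
    LinearIndependent ℝ e := by
  rw [Fintype.linearIndependent_iff]
  intro c hc j
  have := congrArg (e j ⬝ᵥ ·) hc
  simpa [dotProduct_sum, dotProduct_smul, he, eq_comm] using this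

section LinearMap

variable {K U V W : Type*} [Field K] [AddCommGroup U] [Module K U] [AddCommGroup V] [Module K V]
  [AddCommGroup W] [Module K W]

theorem Submodule.span_preimage_eq_top_of_injective {T : U →ₗ[K] V} (hT : Function.Injective T)
    {s : Set V} (hs : LinearMap.range T = Submodule.span K s) :
    Submodule.span K (T ⁻¹' s) = ⊤ := by
  have hsT : s ⊆ Set.range T := by
    rw [← LinearMap.coe_range, hs]
    exact Submodule.subset_span
  apply Submodule.map_injective_of_injective hT
  rw [Submodule.map_span, Set.image_preimage_eq_of_subset hsT, Submodule.map_top, hs]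

theorem LinearMap.finrank_ker_comp_of_injective {f : V →ₗ[K] W} {g : U →ₗ[K] V}
    (hg : Function.Injective g) (hker : LinearMap.ker f ≤ LinearMap.range g) :
    finrank K (LinearMap.ker (f ∘ₗ g)) = finrank K (LinearMap.ker f) := by
  rw [LinearMap.ker_comp, (Submodule.equivMapOfInjective g hg _).finrank_eq,
    Submodule.map_comap_eq_self hker]

theorem LinearMap.finrank_range_add_finrank_eq_of_injective [FiniteDimensional K U]
    [FiniteDimensional K V] {f : V →ₗ[K] W} {g : U →ₗ[K] V}
    (hg : Function.Injective g) (hker : LinearMap.ker f ≤ LinearMap.range g) :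
    finrank K (LinearMap.range f) + finrank K U =
      finrank K (LinearMap.range (f ∘ₗ g)) + finrank K V := by
  have hf := f.finrank_range_add_finrank_ker
  have hfg := (f ∘ₗ g).finrank_range_add_finrank_ker
  rw [LinearMap.finrank_ker_comp_of_injective hg hker] at hfg
  omega

end LinearMap

section Restriction

variable {k m n N d : ℕ} {A : (Fin m → ℕ) → Matrix (Fin N) (Fin n) ℝ}
  {A' : (Fin m → ℕ) → Matrix (Fin N) (Fin d) ℝ} {T : (Fin d → ℝ) →ₗ[ℝ] (Fin n → ℝ)}

theorem waveCone_eq_preimage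
    (hA' : ∀ ξ η, (opSymb k A' ξ).mulVec η = (opSymb k A ξ).mulVec (T η)) :
    waveCone k A' = T ⁻¹' waveCone k A := by
  simp only [waveCone, hA']
  rfl

theorem rank_opSymb_add_eq (hT : Function.Injective T)
    (hA' : ∀ ξ η, (opSymb k A' ξ).mulVec η = (opSymb k A ξ).mulVec (T η))
    (hwave : waveCone k A ⊆ LinearMap.range T) {ξ : Fin m → ℝ} (hξ : ξ ≠ 0) :
    (opSymb k A ξ).rank + d = (opSymb k A' ξ).rank + n := by
  have hcomp : (opSymb k A' ξ).mulVecLin = (opSymb k A ξ).mulVecLin ∘ₗ T :=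
    LinearMap.ext (hA' ξ)
  have hker : LinearMap.ker (opSymb k A ξ).mulVecLin ≤ LinearMap.range T :=
    fun η hη => hwave ⟨ξ, hξ, hη⟩
  have := LinearMap.finrank_range_add_finrank_eq_of_injective hT hker
  rwa [← hcomp, finrank_fin_fun, finrank_fin_fun] at this

theorem constRank_iff_of_rank_add_eq
    (h : ∀ ξ : Fin m → ℝ, ξ ≠ 0 → (opSymb k A ξ).rank + d = (opSymb k A' ξ).rank + n) :
    ConstRank k A ↔ ConstRank k A' := by
  constructor
  · rintro ⟨r, hr⟩
    refine ⟨r + d - n, fun ξ hξ => ?_⟩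
    have := hr ξ hξ
    have := h ξ hξ
    omega
  · rintro ⟨r, hr⟩
    refine ⟨r + n - d, fun ξ hξ => ?_⟩
    have := hr ξ hξ
    have := h ξ hξ
    omega

end Restriction

theorem balanced_restriction_general
    {k m n N d : ℕ}
    (A : (Fin m → ℕ) → Matrix (Fin N) (Fin n) ℝ)
    (e : Fin d → (Fin n → ℝ))
    (he : ∀ i j : Fin d, e i ⬝ᵥ e j = if i = j then (1 : ℝ) else 0)
    (hspan : Submodule.span ℝ (Set.range e) = Submodule.span ℝ (waveCone k A))
    (A' : (Fin m → ℕ) → Matrix (Fin N) (Fin d) ℝ)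
    (hA' : ∀ (ξ : Fin m → ℝ) (η : Fin d → ℝ),
      (opSymb k A' ξ).mulVec η = (opSymb k A ξ).mulVec (∑ i, η i • e i)) :
    IsBalanced k A' ∧ (ConstRank k A ↔ ConstRank k A') := by
  set T := Fintype.linearCombination ℝ e
  have hT : Function.Injective T :=
    (linearIndependent_of_dotProduct_eq_ite he).fintypeLinearCombination_injective
  have hrange : LinearMap.range T = Submodule.span ℝ (waveCone k A) :=
    (Fintype.range_linearCombination ℝ e).trans hspan
  have hwave : waveCone k A ⊆ LinearMap.range T := hrange ▸ Submodule.subset_span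
  constructor
  · rw [IsBalanced, waveCone_eq_preimage (T := T) hA']
    exact Submodule.span_preimage_eq_top_of_injective hT hrange
  · exact constRank_iff_of_rank_add_eq fun ξ hξ => rank_opSymb_add_eq (T := T) hT hA' hwave hξ

/-- Restricting a homogeneous operator `𝒜` to the span `π` of its wave cone (via an orthonormal
basis `e` of `π`, of dimension `d ≥ 1`) gives an operator `𝒜'` which is balanced; moreover `𝒜`
has constant rank iff `𝒜'` does. -/
theorem balanced_restriction
    {k m n N d : ℕ} (hd : 1 ≤ d)
    (A : (Fin m → ℕ) → Matrix (Fin N) (Fin n) ℝ)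
    (e : Fin d → (Fin n → ℝ))
    (he : ∀ i j : Fin d, e i ⬝ᵥ e j = if i = j then (1 : ℝ) else 0)
    (hspan : Submodule.span ℝ (Set.range e) = Submodule.span ℝ (waveCone k A))
    (A' : (Fin m → ℕ) → Matrix (Fin N) (Fin d) ℝ)
    (hA' : ∀ (ξ : Fin m → ℝ) (η : Fin d → ℝ),
      (opSymb k A' ξ).mulVec η = (opSymb k A ξ).mulVec (∑ i, η i • e i)) :
    IsBalanced k A' ∧ (ConstRank k A ↔ ConstRank k A') :=
  balanced_restriction_general A e he hspan A' hA'
end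

section
/- Let 𝒜 be a homogeneous linear differential operator of order k on ℝ^m with values in ℝ^N acting on ℝ^n-valued functions, of constant rank and balanced, and let 𝓑 (of order k', with matrices B_α ∈ ℝ^{n×n'}) be a potential for 𝒜. Then the linear map T from the space of n'-tuples of homogeneous polynomials of degree k' on ℝ^m to ℝ^n, defined by T(q) = 𝓑(q) = Σ_{|α|=k'} B_α ∂^α q (which is a constant vector when q is homogeneous of degree k'), is surjective: for every v ∈ ℝ^n there exists such a q with Σ_{|α|=k'} B_α ∂^α q ≡ v. -/
/-! Every vector of the wave cone lies in `ker 𝔸(ξ) = im 𝔹(ξ)` for some `ξ ≠ 0`, say it is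
`𝔹(ξ) w`. The plane wave `x ↦ (ξ ⬝ᵥ x)^k' • w` is homogeneous of degree `k'`, and since
`∂^α (ξ ⬝ᵥ x)^k' = k'! ξ^α` for `|α| = k'`, the operator `𝓑` maps it to the constant `k'! 𝔹(ξ) w`.
As `𝒜` is balanced, `v` is a finite combination of wave cone vectors, hence the image of the
corresponding combination of plane waves. -/

open MeasureTheory Metric Set Matrix Filter

open Finset

section PlaneWaves

variable {m : ℕ} {E : Type*} [NormedAddCommGroup E] [NormedSpace ℝ E] {T : Type*}

noncomputable def planeWaves (s : Finset T) (ξ : T → Fin m → ℝ) (w : T → E) (p : ℕ) :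
    (Fin m → ℝ) → E :=
  fun x => ∑ t ∈ s, (ξ t ⬝ᵥ x) ^ p • w t

theorem hasFDerivAt_dotProduct (ξ x : Fin m → ℝ) :
    HasFDerivAt (ξ ⬝ᵥ ·) (∑ i, ξ i • ContinuousLinearMap.proj (R := ℝ) (φ := fun _ => ℝ) i) x :=
  HasFDerivAt.fun_sum fun i _ => (hasFDerivAt_apply i x).const_mul (ξ i)

theorem pderiv'_planeWaves (s : Finset T) (ξ : T → Fin m → ℝ) (w : T → E) (p : ℕ)
    (i : Fin m) :
    pderiv' i (planeWaves s ξ w p) = planeWaves s ξ (fun t => (p * ξ t i) • w t) (p - 1) := by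
  funext x
  have hwave : HasFDerivAt (planeWaves s ξ w p) _ x := HasFDerivAt.fun_sum (u := s) fun t _ =>
      ((hasDerivAt_pow p _).comp_hasFDerivAt x (hasFDerivAt_dotProduct (ξ t) x)).smul_const (w t)
  simp only [pderiv', hwave.fderiv, _root_.sum_apply,
    ContinuousLinearMap.smulRight_apply, _root_.smul_apply,
    ContinuousLinearMap.proj_apply, Pi.single_apply, smul_eq_mul, mul_ite, mul_one, mul_zero,
    sum_ite_eq', Finset.mem_univ, if_true, planeWaves, smul_smul]
  exact sum_congr rfl fun t _ => by congr 1; ring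

theorem iterate_pderiv'_planeWaves (s : Finset T) (ξ : T → Fin m → ℝ) (w : T → E) (p : ℕ)
    (i : Fin m) (a : ℕ) :
    (pderiv' i)^[a] (planeWaves s ξ w p)
      = planeWaves s ξ (fun t => (p.descFactorial a * ξ t i ^ a) • w t) (p - a) := by
  induction a with
  | zero => simp
  | succ a ih =>
    rw [Function.iterate_succ_apply', ih, pderiv'_planeWaves, Nat.sub_sub]
    congr 1
    funext t
    rw [smul_smul, Nat.descFactorial_succ, Nat.cast_mul, pow_succ]
    ring_nf

theorem foldr_pderiv'_planeWaves (s : Finset T) (ξ : T → Fin m → ℝ) (w : T → E) (p : ℕ)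
    (α : Fin m → ℕ) (L : List (Fin m)) :
    L.foldr (fun i g => (pderiv' i)^[α i] g) (planeWaves s ξ w p)
      = planeWaves s ξ (fun t => (p.descFactorial (L.map α).sum
          * (L.map fun i => ξ t i ^ α i).prod) • w t) (p - (L.map α).sum) := by
  induction L with
  | nil => simp
  | cons i L ih =>
    have hdesc :=
      Nat.descFactorial_mul_descFactorial (n := p) (Nat.le_add_left (L.map α).sum (α i))
    rw [Nat.add_sub_cancel] at hdesc
    rw [List.foldr_cons, ih, iterate_pderiv'_planeWaves, Nat.sub_sub, Nat.add_comm _ (α i)]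
    simp only [List.map_cons, List.sum_cons, List.prod_cons, smul_smul, ← hdesc, Nat.cast_mul]
    congr 1
    funext t
    ring_nf

theorem mderiv_planeWaves (s : Finset T) (ξ : T → Fin m → ℝ) (w : T → E) (p : ℕ)
    (α : Fin m → ℕ) :
    mderiv α (planeWaves s ξ w p)
      = planeWaves s ξ (fun t => (p.descFactorial (∑ i, α i) * ∏ i, ξ t i ^ α i) • w t)
          (p - ∑ i, α i) := by
  simp only [mderiv, foldr_pderiv'_planeWaves, Fin.sum_univ_def, Fin.prod_univ_def]

theorem planeWaves_zero (s : Finset T) (ξ : T → Fin m → ℝ) (w : T → E) :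
    planeWaves s ξ w 0 = fun _ => ∑ t ∈ s, w t := by
  funext x
  simp [planeWaves]

end PlaneWaves

theorem opSymb_mulVec {m n n' : ℕ} (k : ℕ) (B : (Fin m → ℕ) → Matrix (Fin n) (Fin n') ℝ)
    (ξ : Fin m → ℝ) (w : Fin n' → ℝ) :
    opSymb k B ξ *ᵥ w = ∑ α ∈ mIdx m k, (∏ i, ξ i ^ α i) • B α *ᵥ w := by
  simp only [opSymb, sum_mulVec, smul_mulVec]

theorem opApply_planeWaves {m n n' : ℕ} {T : Type*} (k : ℕ)
    (B : (Fin m → ℕ) → Matrix (Fin n) (Fin n') ℝ) (s : Finset T) (ξ : T → Fin m → ℝ)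
    (w : T → Fin n' → ℝ) (x : Fin m → ℝ) :
    opApply k B (planeWaves s ξ w k) x
      = (k.factorial : ℝ) • ∑ t ∈ s, opSymb k B (ξ t) *ᵥ w t := by
  have hderiv : ∀ α ∈ mIdx m k, B α *ᵥ mderiv α (planeWaves s ξ w k) x
      = ∑ t ∈ s, ((k.factorial : ℝ) * ∏ i, ξ t i ^ α i) • B α *ᵥ w t := by
    intro α hα
    have hwave := mderiv_planeWaves s ξ w k α
    rw [(mem_filter.mp hα).2, Nat.sub_self, Nat.descFactorial_self, planeWaves_zero] at hwave
    simp only [hwave, mulVec_sum, mulVec_smul]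
  simp only [opApply, sum_congr rfl hderiv, opSymb_mulVec, smul_sum, smul_smul]
  exact sum_comm

theorem exists_isHomogeneous_eval_planeWaves {m n' : ℕ} {T : Type*} (s : Finset T)
    (ξ : T → Fin m → ℝ) (w : T → Fin n' → ℝ) (p : ℕ) (j : Fin n') :
    ∃ P : MvPolynomial (Fin m) ℝ, P.IsHomogeneous p ∧
      ∀ x, planeWaves s ξ w p x j = MvPolynomial.eval x P := by
  open MvPolynomial in
  refine ⟨∑ t ∈ s, C (w t j) * (∑ i, C (ξ t i) * X i) ^ p, ?_, fun x => ?_⟩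
  · refine IsHomogeneous.sum _ _ _ fun t _ => ?_
    have hlin : (∑ i, C (ξ t i) * X i : MvPolynomial (Fin m) ℝ).IsHomogeneous 1 :=
      IsHomogeneous.sum _ _ _ fun i _ => isHomogeneous_C_mul_X _ _
    simpa using (hlin.pow p).C_mul (w t j)
  · simp [planeWaves, dotProduct, mul_comm]

theorem IsPotential.exists_mulVec_eq_of_mem_waveCone {m n n' N k k' : ℕ}
    {A : (Fin m → ℕ) → Matrix (Fin N) (Fin n) ℝ} {B : (Fin m → ℕ) → Matrix (Fin n) (Fin n') ℝ}
    (hpot : IsPotential k k' A B) {η : Fin n → ℝ} (hη : η ∈ waveCone k A) :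
    ∃ ξ w, opSymb k' B ξ *ᵥ w = η := by
  obtain ⟨ξ, hξ, hker⟩ := hη
  obtain ⟨w, hw⟩ := (hpot ξ hξ).le (LinearMap.mem_ker.mpr hker)
  exact ⟨ξ, w, hw⟩

theorem potential_surjective_on_homogeneous_polynomials_general
    {k k' m n n' N : ℕ}
    (A : (Fin m → ℕ) → Matrix (Fin N) (Fin n) ℝ)
    (B : (Fin m → ℕ) → Matrix (Fin n) (Fin n') ℝ)
    (hbal : IsBalanced k A) (hpot : IsPotential k k' A B)
    (v : Fin n → ℝ) :
    ∃ q : (Fin m → ℝ) → (Fin n' → ℝ),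
      (∀ j : Fin n', ∃ p : MvPolynomial (Fin m) ℝ,
        p.IsHomogeneous k' ∧ ∀ x, q x j = MvPolynomial.eval x p) ∧
      (∀ x, opApply k' B q x = v) := by
  classical
  have hv : v ∈ Submodule.span ℝ (waveCone k A) := hbal ▸ Submodule.mem_top
  obtain ⟨c, hc, rfl⟩ := Submodule.mem_span_set.mp hv
  choose! ξ w hw using fun η (hη : η ∈ c.support) => hpot.exists_mulVec_eq_of_mem_waveCone (hc hη)
  refine ⟨planeWaves c.support ξ (fun η => (c η / k'.factorial) • w η) k',
    exists_isHomogeneous_eval_planeWaves _ _ _ _, fun x => ?_⟩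
  rw [opApply_planeWaves, Finsupp.sum, smul_sum]
  refine sum_congr rfl fun η hη => ?_
  rw [mulVec_smul, hw η hη, smul_smul, mul_div_cancel₀ _ (by positivity)]

/-- For a balanced constant-rank operator `𝒜` with potential `𝓑` of order `k'`, the map
`q ↦ 𝓑(q)` from `n'`-tuples of homogeneous polynomials of degree `k'` to `ℝ^n` is surjective. -/
theorem potential_surjective_on_homogeneous_polynomials
    {k k' m n n' N : ℕ}
    (A : (Fin m → ℕ) → Matrix (Fin N) (Fin n) ℝ)
    (B : (Fin m → ℕ) → Matrix (Fin n) (Fin n') ℝ)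
    (hcr : ConstRank k A) (hbal : IsBalanced k A) (hpot : IsPotential k k' A B)
    (v : Fin n → ℝ) :
    ∃ q : (Fin m → ℝ) → (Fin n' → ℝ),
      (∀ j : Fin n', ∃ p : MvPolynomial (Fin m) ℝ,
        p.IsHomogeneous k' ∧ ∀ x, q x j = MvPolynomial.eval x p) ∧
      (∀ x, opApply k' B q x = v) :=
  potential_surjective_on_homogeneous_polynomials_general A B hbal hpot v
end

section
/- Let 𝒜 be a homogeneous linear differential operator with wave cone Λ_𝒜 ⊆ ℝ^n. If U ⊂ ℝ^n is open, then its Λ_𝒜-convex hull U^{Λ_𝒜} is open. -/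
open MeasureTheory Metric Set Matrix Filter

lemma lamHull_translate {n : ℕ} (Λ : Set (Fin n → ℝ)) (K : Set (Fin n → ℝ))
    (hK : IsCompact K) {x : Fin n → ℝ} (v : Fin n → ℝ)
    (hx : x ∈ lamHull Λ K) : x + v ∈ lamHull Λ ((· + v) '' K) := by
  obtain ⟨ν, hprob, hνK, hbar, hconv⟩ := hx
  have hmeas : Measurable fun y : Fin n → ℝ => y + v := measurable_add_const v
  obtain ⟨C, hC⟩ := hK.isBounded.exists_norm_le
  have hae : ∀ᵐ y ∂ν, y ∈ K := by
    rw [ae_iff]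
    simpa [Set.compl_def] using hνK
  have hInt : Integrable (fun y : Fin n → ℝ => y) ν :=
    ⟨aestronglyMeasurable_id, HasFiniteIntegral.of_bounded (C := C)
      (hae.mono fun y hy => hC y hy)⟩
  refine ⟨Measure.map (· + v) ν, Measure.isProbabilityMeasure_map hmeas.aemeasurable, ?_, ?_, ?_⟩
  · rw [Measure.map_apply hmeas
      ((hK.image (continuous_add_right v)).isClosed.measurableSet.compl),
      Set.preimage_compl, Set.preimage_image_eq K (add_left_injective v)]
    exact hνK
  · have hmap : (∫ y, y ∂Measure.map (fun x => x + v) ν) = ∫ y, (y + v) ∂ν :=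
      integral_map hmeas.aemeasurable aestronglyMeasurable_id
    have : ∫ y, (y + v) ∂ν = (∫ y, y ∂ν) + v := by
      rw [integral_add hInt (integrable_const v), integral_const]
      simp
    rw [hmap, this, ← hbar]
  · intro f hf hfc
    have hconv' : LamConvex Λ (fun y => f (y + v)) := by
      intro a b hab t ht
      have heq : t • a + (1 - t) • b + v = t • (a + v) + (1 - t) • (b + v) := by
        have : t • v + (1 - t) • v = v := by
          rw [← add_smul]; simp
        rw [smul_add, smul_add]
        rw [show t • a + t • v + ((1 - t) • b + (1 - t) • v)
            = t • a + (1 - t) • b + (t • v + (1 - t) • v) by abel, this]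
      simp only [heq]
      exact hfc (a + v) (b + v) (by simpa using hab) t ht
    have key := hconv (fun y => f (y + v))
      (hf.comp (continuous_id.add continuous_const)) hconv'
    rw [integral_map hmeas.aemeasurable hf.aestronglyMeasurable]
    exact key

/-- The `Λ_𝒜`-convex hull of an open set is open. -/
theorem lamHullOpen_isOpen
    {k m n N : ℕ}
    (A : (Fin m → ℕ) → Matrix (Fin N) (Fin n) ℝ)
    (U : Set (Fin n → ℝ)) (hU : IsOpen U) :
    IsOpen (lamHullOpen (waveCone k A) U) := by
  rw [isOpen_iff_forall_mem_open]
  intro x hx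
  simp only [lamHullOpen, Set.mem_iUnion, Set.mem_setOf_eq] at hx
  obtain ⟨K, ⟨hKc, hKU⟩, hxK⟩ := hx
  obtain ⟨δ, hδ, hthick⟩ := hKc.exists_thickening_subset_open hU hKU
  refine ⟨ball x δ, ?_, isOpen_ball, mem_ball_self hδ⟩
  intro z hz
  have hK' : IsCompact ((· + (z - x)) '' K) :=
    hKc.image (continuous_id.add continuous_const)
  have hK'U : ((· + (z - x)) '' K) ⊆ U := by
    intro w hw
    obtain ⟨y, hy, rfl⟩ := hw
    apply hthick
    rw [Metric.mem_thickening_iff]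
    refine ⟨y, hy, ?_⟩
    have : dist (y + (z - x)) y = dist z x := by
      rw [dist_eq_norm, dist_eq_norm]
      simp
    rw [this]
    exact mem_ball.mp hz
  have := lamHull_translate (waveCone k A) K hKc (z - x) hxK
  simp only [lamHullOpen, Set.mem_iUnion, Set.mem_setOf_eq]
  exact ⟨(· + (z - x)) '' K, ⟨hK', hK'U⟩, by simpa using this⟩
end
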